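/- Let α be irrational with 1 < α < 2 and let β satisfy 1/α + 1/β = 1 (so that β > 2), and set q = ⌊β⌋. Set a_n = ⌊nα⌋, b_n = ⌊nβ⌋, A = {⌊mα⌋ : m ≥ 1}, and define c_n as the number of integers m ∈ A with a_n < m < b_n. Then for every n ≥ 1, the difference c_{n+1} − c_n equals q − 2 or q − 1, and c_{n+1} − c_n = q − 2 if and only if b_{n+1} − b_n = q. -/

import Mathlib

/-!
For `n ≥ 1` the elements of `A` below `b_n = ⌊nβ⌋` are exactly `a_1, …, a_t` with `t = b_n - n`:
from `(α - 1) β = α` one gets `t α ≤ b_n < (t + 1) α`, and the first inequality is strict because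
`t α` is irrational. Those strictly above `a_n` are therefore `a_{n+1}, …, a_t`, so
`c_n = b_n - 2n` (note `b_n ≥ 2n` as `β > 2`). Hence `c_{n+1} - c_n = (b_{n+1} - b_n) - 2`,
and `b_{n+1} - b_n = ⌊nβ + β⌋ - ⌊nβ⌋` is `⌊β⌋` or `⌊β⌋ + 1`.
-/

open Real

theorem Int.floor_add_sub_floor_eq_or {R : Type*} [Ring R] [LinearOrder R] [IsStrictOrderedRing R]
    [FloorRing R] (x y : R) : ⌊x + y⌋ - ⌊x⌋ = ⌊y⌋ ∨ ⌊x + y⌋ - ⌊x⌋ = ⌊y⌋ + 1 := by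
  have := Int.le_floor_add x y
  have := Int.le_floor_add_floor x y
  omega

section Beatty

variable {α β : ℝ}

theorem strictMono_floor_natCast_mul (hα : 1 ≤ α) : StrictMono fun k : ℕ => ⌊(k : ℝ) * α⌋ := by
  intro k l hkl
  have hkl' : (k : ℝ) + 1 ≤ l := by exact_mod_cast hkl
  refine Int.lt_iff_add_one_le.mpr (Int.le_floor.mpr ?_)
  push_cast
  nlinarith [Int.floor_le ((k : ℝ) * α)]

theorem natCast_mul_lt_iff_le {t : ℕ} {x : ℝ} (hα : 0 ≤ α) (ht : t * α < x)
    (hx : x ≤ (t + 1) * α) (k : ℕ) : k * α < x ↔ k ≤ t := by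
  constructor
  · intro hk
    by_contra! htk
    have htk' : (t : ℝ) + 1 ≤ k := by exact_mod_cast htk
    nlinarith
  · intro hkt
    have hkt' : (k : ℝ) ≤ t := by exact_mod_cast hkt
    nlinarith

theorem ncard_floor_natCast_mul_mem_Ioo (hα : 1 ≤ α) (n t : ℕ) {N : ℤ} (ht : t * α < N)
    (hN : (N : ℝ) ≤ (t + 1) * α) :
    {m : ℤ | (∃ k : ℕ, 0 < k ∧ m = ⌊(k : ℝ) * α⌋) ∧ ⌊(n : ℝ) * α⌋ < m ∧ m < N}.ncard = t - n := by
  have hmono := strictMono_floor_natCast_mul hα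
  have hset : {m : ℤ | (∃ k : ℕ, 0 < k ∧ m = ⌊(k : ℝ) * α⌋) ∧ ⌊(n : ℝ) * α⌋ < m ∧ m < N} =
      ((Finset.Ioc n t).image fun k : ℕ => ⌊(k : ℝ) * α⌋ : Set ℤ) := by
    ext m
    simp only [Set.mem_ofPred_eq, Finset.coe_image, Finset.coe_Ioc, Set.mem_image, Set.mem_Ioc]
    constructor
    · rintro ⟨⟨k, -, rfl⟩, hnk, hkN⟩
      refine ⟨k, ⟨hmono.lt_iff_lt.mp hnk, ?_⟩, rfl⟩
      exact (natCast_mul_lt_iff_le (by linarith) ht hN k).mp (Int.floor_lt.mp hkN)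
    · rintro ⟨k, ⟨hnk, hkt⟩, rfl⟩
      refine ⟨⟨k, by omega, rfl⟩, hmono hnk, ?_⟩
      exact Int.floor_lt.mpr ((natCast_mul_lt_iff_le (by linarith) ht hN k).mpr hkt)
  rw [hset, Set.ncard_coe_finset, Finset.card_image_of_injective _ hmono.injective,
    Nat.card_Ioc]

namespace Real.HolderConjugate

variable (hαβ : α.HolderConjugate β)
include hαβ

theorem floor_natCast_mul_mem_Ico (n : ℕ) :
    (⌊(n : ℝ) * β⌋ : ℝ) ∈ Set.Ico (((⌊(n : ℝ) * β⌋ - n : ℤ) : ℝ) * α)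
      (((⌊(n : ℝ) * β⌋ - n + 1 : ℤ) : ℝ) * α) := by
  set b := ⌊(n : ℝ) * β⌋
  have hconj := hαβ.sub_one_mul_conj
  have hα := hαβ.lt
  have hb_le : (b : ℝ) ≤ n * β := Int.floor_le _
  have hb_gt : (n : ℝ) * β - 1 < b := Int.sub_one_lt_floor _
  -- both gaps factor through `(α - 1) β = α`
  have hlow : ((b - n : ℤ) : ℝ) * α - b = (α - 1) * (b - n * β) := by
    push_cast; linear_combination (n : ℝ) * hconj
  have hupp : ((b - n + 1 : ℤ) : ℝ) * α - b = (α - 1) * (b - n * β + 1) + 1 := by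
    push_cast; linear_combination (n : ℝ) * hconj
  constructor
  · nlinarith
  · nlinarith

theorem ncard_floor_natCast_mul_mem_Ioo_conj (hirr : Irrational α) (hβ : 2 ≤ β) {n : ℕ}
    (hn : 0 < n) :
    ({m : ℤ | (∃ k : ℕ, 0 < k ∧ m = ⌊(k : ℝ) * α⌋) ∧
        ⌊(n : ℝ) * α⌋ < m ∧ m < ⌊(n : ℝ) * β⌋}.ncard : ℤ) = ⌊(n : ℝ) * β⌋ - 2 * n := by
  set b := ⌊(n : ℝ) * β⌋
  have h2n : 2 * (n : ℤ) ≤ b := by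
    refine Int.le_floor.mpr ?_
    push_cast
    nlinarith [(Nat.cast_pos.mpr hn : (0 : ℝ) < n)]
  obtain ⟨t, ht⟩ : ∃ t : ℕ, (t : ℤ) = b - n := ⟨(b - n).toNat, Int.toNat_of_nonneg (by omega)⟩
  obtain ⟨hlow, hupp⟩ := hαβ.floor_natCast_mul_mem_Ico n
  rw [← ht] at hlow hupp
  push_cast at hlow hupp
  have hne : (t : ℝ) * α ≠ b := (hirr.natCast_mul (by omega)).ne_int b
  rw [ncard_floor_natCast_mul_mem_Ioo hαβ.lt.le n t (lt_of_le_of_ne hlow hne) hupp.le]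
  omega

end Real.HolderConjugate

end Beatty

theorem c_difference_sturmian
    (α β : ℝ) (hαirr : Irrational α)
    (hα1 : 1 < α) (hα2 : α < 2) (hsum : 1 / α + 1 / β = 1)
    (q : ℤ) (hq : q = ⌊β⌋)
    (a b : ℕ → ℤ)
    (ha : ∀ n : ℕ, a n = ⌊(n : ℝ) * α⌋)
    (hb : ∀ n : ℕ, b n = ⌊(n : ℝ) * β⌋)
    (c : ℕ → ℕ)
    (hc : ∀ n : ℕ, c n =
      {m : ℤ | (∃ k : ℕ, 0 < k ∧ m = ⌊(k : ℝ) * α⌋) ∧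
        a n < m ∧ m < b n}.ncard) :
    ∀ n : ℕ, 0 < n →
      ((c (n + 1) : ℤ) - (c n : ℤ) = q - 2 ∨ (c (n + 1) : ℤ) - (c n : ℤ) = q - 1) ∧
      ((c (n + 1) : ℤ) - (c n : ℤ) = q - 2 ↔ b (n + 1) - b n = q) := by
  intro n hn
  have hαβ : α.HolderConjugate β :=
    holderConjugate_iff.mpr ⟨hα1, by simpa only [one_div] using hsum⟩
  have hβ : 2 ≤ β := by nlinarith [hαβ.sub_one_mul_conj]
  have hc_eq : ∀ n, 0 < n → (c n : ℤ) = b n - 2 * n := fun n hn => by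
    rw [hc, ha, hb]
    exact hαβ.ncard_floor_natCast_mul_mem_Ioo_conj hαirr hβ hn
  have hb_step : b (n + 1) - b n = q ∨ b (n + 1) - b n = q + 1 := by
    rw [hb, hb, hq, Nat.cast_succ, add_one_mul]
    exact Int.floor_add_sub_floor_eq_or _ _
  rw [hc_eq n hn, hc_eq (n + 1) n.succ_pos]
  push_cast
  omega
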